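/- Define y ∈* x iff ∃X: y ε X ∧ x = ι(X). Then Replacement holds for ∈*: if F is a class function (definable by a formula) and a is an ordinal, there is an ordinal x whose ∈*-elements are exactly the F-images of ∈*-elements of a. -/
import Mathlib


/-- A two-sorted signature for Class Ordering Theory: `O` is the sort of
ordinals, `C` the sort of (flat, possibly non-extensional) classes of
ordinals, with membership `mem`, the prior relation `prec`, and the (partial)
indexing function `iota` given as a functional relation. -/
structure COT (O : Type*) (C : Type*) where
  mem : O → C → Prop
  prec : C → C → Prop
  iota : C → O → Prop

namespace COT

variable {O C : Type*} (S : COT O C)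

/-- Coextensionality of classes. -/
def equiv (X Y : C) : Prop := ∀ z, S.mem z X ↔ S.mem z Y

/-- `X` is a singleton class of `x`. -/
def isSing (x : O) (X : C) : Prop := ∀ z, S.mem z X ↔ z = x

/-- `x < y` iff `{x} ≺ {y}` (for all classes realizing the singletons). -/
def lt (x y : O) : Prop := ∀ X Y, S.isSing x X → S.isSing y Y → S.prec X Y

/-- `x ≤ y`. -/
def le (x y : O) : Prop := S.lt x y ∨ x = y

/-- `l` is the least ordinal strictly above all elements of `X` (the limit of `X`). -/
def isLim (X : C) (l : O) : Prop :=
  (∀ x, S.mem x X → S.lt x l) ∧ ∀ l', (∀ x, S.mem x X → S.lt x l') → S.le l l'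

/-- `X` is bounded: it has a limit. -/
def bnd (X : C) : Prop := ∃ l, S.isLim X l

/-- `Y` is a subclass of `X`. -/
def subclass (Y X : C) : Prop := ∀ z, S.mem z Y → S.mem z X

/-- Equinumerosity: there is a class bijection between `X` and `Y`. -/
def equinum (X Y : C) : Prop :=
  ∃ R : O → O → Prop, (∀ a b, R a b → S.mem a X ∧ S.mem b Y) ∧
    (∀ a, S.mem a X → ∃! b, R a b) ∧ (∀ b, S.mem b Y → ∃! a, R a b)

/-- `i = lim {ι(Y) : Y ≺ X}`: `i` is the least ordinal strictly above all
indices of classes prior to `X`. -/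
def indexSpec (X : C) (i : O) : Prop :=
  (∀ Y j, S.prec Y X → S.iota Y j → S.lt j i) ∧
    ∀ i', (∀ Y j, S.prec Y X → S.iota Y j → S.lt j i') → S.le i i'

/-- The interpreted set membership: `y ∈* x` iff `y ε ι⁻¹(x)`. -/
def memStar (y x : O) : Prop := ∃ X, S.mem y X ∧ S.iota X x

/-- The axioms of COT. -/
structure Axioms : Prop where
  /-- Comprehension. -/
  comp : ∀ P : O → Prop, ∃ X, ∀ x, S.mem x X ↔ P x
  /-- `≺` is transitive. -/
  prec_trans : ∀ X Y Z, S.prec X Y → S.prec Y Z → S.prec X Z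
  /-- `≺` is co-connected. -/
  coConnected : ∀ X Y, ¬ S.equiv X Y ↔ (S.prec X Y ∨ S.prec Y X)
  /-- `≺` is well-founded (schema). -/
  wf : ∀ P : C → Prop, (∃ X, P X) → ∃ M, P M ∧ ∀ Y, P Y → ¬ S.prec Y M
  /-- Respective: `lim X ≤ y ε Y → X ≺ Y`. -/
  respective : ∀ X Y l y, S.isLim X l → S.le l y → S.mem y Y → S.prec X Y
  /-- `ι` is a partial function. -/
  iota_fun : ∀ X i j, S.iota X i → S.iota X j → i = j
  /-- Indexing: every bounded class has an index. -/
  indexing : ∀ X, S.bnd X → ∃ i, S.iota X i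
  /-- The index satisfies `ι(X) = lim {ι(Y) : Y ≺ X}`. -/
  iota_spec : ∀ X i, S.iota X i → S.indexSpec X i
  /-- Infinity: there is a nonzero ordinal closed under successor from below. -/
  infinity : ∃ l : O, (∃ k, S.lt k l) ∧ ∀ x, S.lt x l → ∃ y, S.lt x y ∧ S.lt y l
  /-- Boundedness: a class equinumerous with a bounded class is bounded. -/
  boundedness : ∀ X Y, S.bnd X → S.equinum X Y → S.bnd Y

end COT

namespace COT

variable {O C : Type*} {S : COT O C} (hS : S.Axioms)

lemma equiv_refl (X : C) : S.equiv X X := fun _ => Iff.rfl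
lemma equiv_symm {X Y : C} (h : S.equiv X Y) : S.equiv Y X := fun z => (h z).symm
lemma equiv_trans {X Y Z : C} (h : S.equiv X Y) (h' : S.equiv Y Z) : S.equiv X Z :=
  fun z => (h z).trans (h' z)

lemma isSing_equiv {x : O} {X X' : C} (h : S.isSing x X) (h' : S.isSing x X') :
    S.equiv X X' := fun z => (h z).trans (h' z).symm

include hS

lemma sing_ex (x : O) : ∃ X, S.isSing x X := hS.comp (· = x)

lemma prec_not_equiv {X Y : C} (h : S.prec X Y) : ¬ S.equiv X Y :=
  (hS.coConnected X Y).mpr (Or.inl h)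

lemma prec_congr_left {X X' Y : C} (he : S.equiv X X') (h : S.prec X Y) : S.prec X' Y := by
  have hne : ¬ S.equiv X' Y := fun h' => prec_not_equiv hS h (equiv_trans he h')
  rcases (hS.coConnected X' Y).mp hne with h' | h'
  · exact h'
  · exact absurd (hS.prec_trans X Y X' h h') (fun hp => prec_not_equiv hS hp he)

lemma prec_congr_right {X Y Y' : C} (he : S.equiv Y Y') (h : S.prec X Y) : S.prec X Y' := by
  have hne : ¬ S.equiv X Y' := fun h' => prec_not_equiv hS h (equiv_trans h' (equiv_symm he))
  rcases (hS.coConnected X Y').mp hne with h' | h'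
  · exact h'
  · exact absurd (hS.prec_trans Y' X Y h' h) (fun hp => prec_not_equiv hS hp (equiv_symm he))

lemma lt_of_prec_sing {x y : O} {X Y : C} (hX : S.isSing x X) (hY : S.isSing y Y)
    (h : S.prec X Y) : S.lt x y := fun X' Y' hX' hY' =>
  prec_congr_right hS (isSing_equiv hY hY')
    (prec_congr_left hS (isSing_equiv hX hX') h)

lemma lt_irrefl (x : O) : ¬ S.lt x x := by
  intro h
  obtain ⟨X, hX⟩ := sing_ex hS x
  exact prec_not_equiv hS (h X X hX hX) (equiv_refl X)

lemma lt_trans {x y z : O} (h : S.lt x y) (h' : S.lt y z) : S.lt x z := by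
  intro X Z hX hZ
  obtain ⟨Y, hY⟩ := sing_ex hS y
  exact hS.prec_trans X Y Z (h X Y hX hY) (h' Y Z hY hZ)

lemma trichotomy (x y : O) : S.lt x y ∨ x = y ∨ S.lt y x := by
  obtain ⟨X, hX⟩ := sing_ex hS x
  obtain ⟨Y, hY⟩ := sing_ex hS y
  by_cases he : S.equiv X Y
  · exact Or.inr (Or.inl ((hY x).mp ((he x).mp ((hX x).mpr rfl))))
  · rcases (hS.coConnected X Y).mp he with h | h
    · exact Or.inl (lt_of_prec_sing hS hX hY h)
    · exact Or.inr (Or.inr (lt_of_prec_sing hS hY hX h))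

lemma le_of_not_lt {x y : O} (h : ¬ S.lt y x) : S.le x y := by
  rcases trichotomy hS x y with h' | h' | h'
  · exact Or.inl h'
  · exact Or.inr h'
  · exact absurd h' h

lemma lt_le_asymm {x y : O} (h : S.lt x y) (h' : S.le y x) : False := by
  rcases h' with h' | h'
  · exact lt_irrefl hS y (lt_trans hS h' h)
  · exact lt_irrefl hS y (h' ▸ h)

lemma le_antisymm' {x y : O} (h : S.le x y) (h' : S.le y x) : x = y := by
  rcases h with h | h
  · exact absurd h' (fun h'' => lt_le_asymm hS h h'')
  · exact h

lemma least (Q : O → Prop) (h : ∃ x, Q x) : ∃ m, Q m ∧ ∀ w, Q w → S.le m w := by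
  obtain ⟨M, ⟨m, hM, hQm⟩, hmin⟩ :=
    hS.wf (fun X => ∃ x, S.isSing x X ∧ Q x)
      (by obtain ⟨x, hx⟩ := h; obtain ⟨X, hX⟩ := sing_ex hS x; exact ⟨X, x, hX, hx⟩)
  refine ⟨m, hQm, fun w hw => ?_⟩
  obtain ⟨W, hW⟩ := sing_ex hS w
  exact le_of_not_lt hS (fun hlt => hmin W ⟨w, hW, hw⟩ (hlt W M hW hM))

lemma bnd_of_ub {X : C} (h : ∃ l, ∀ x, S.mem x X → S.lt x l) : S.bnd X := by
  obtain ⟨m, hm, hmin⟩ := least hS (fun l => ∀ x, S.mem x X → S.lt x l) h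
  exact ⟨m, hm, hmin⟩

lemma isLim_pred {y : O} {P : C} (hP : ∀ z, S.mem z P ↔ S.lt z y) : S.isLim P y := by
  constructor
  · exact fun x hx => (hP x).mp hx
  · intro l' hl'
    refine le_of_not_lt hS (fun h => ?_)
    exact lt_irrefl hS l' (hl' l' ((hP l').mpr h))

lemma iota_pred_ge : ∀ y (P : C) j, (∀ z, S.mem z P ↔ S.lt z y) → S.iota P j → S.le y j := by
  by_contra hcon
  push_neg at hcon
  obtain ⟨y, hQy, hleast⟩ := least hS
    (fun y => ∃ P : C, ∃ j, (∀ z, S.mem z P ↔ S.lt z y) ∧ S.iota P j ∧ ¬ S.le y j) hcon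
  obtain ⟨P, j, hP, hj, hnle⟩ := hQy
  have hjy : S.lt j y := by
    rcases trichotomy hS y j with h | h | h
    · exact absurd (Or.inl h) hnle
    · exact absurd (Or.inr h) hnle
    · exact h
  obtain ⟨Pj, hPj⟩ := hS.comp (fun z => S.lt z j)
  obtain ⟨j', hj'⟩ := hS.indexing Pj ⟨j, isLim_pred hS hPj⟩
  have hle : S.le j j' := by
    by_contra hc
    exact lt_le_asymm hS hjy (hleast j ⟨Pj, j', hPj, hj', hc⟩)
  have hprec : S.prec Pj P :=
    hS.respective Pj P j j (isLim_pred hS hPj) (Or.inr rfl) ((hP j).mpr hjy)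
  exact lt_le_asymm hS ((hS.iota_spec P j hj).1 Pj j' hprec hj') hle

lemma indexed_bnd {X : C} {i : O} (h : S.iota X i) : S.bnd X := by
  by_contra hb
  have hub : ∀ l, ∃ x, S.mem x X ∧ ¬ S.lt x l := by
    intro l
    by_contra hc
    push_neg at hc
    exact hb (bnd_of_ub hS ⟨l, hc⟩)
  obtain ⟨x, hxX, hxi⟩ := hub i
  obtain ⟨Pi, hPi⟩ := hS.comp (fun z => S.lt z i)
  have hprec : S.prec Pi X :=
    hS.respective Pi X i x (isLim_pred hS hPi) (le_of_not_lt hS hxi) hxX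
  obtain ⟨j, hj⟩ := hS.indexing Pi ⟨i, isLim_pred hS hPi⟩
  exact lt_le_asymm hS ((hS.iota_spec X i h).1 Pi j hprec hj)
    (iota_pred_ge hS i Pi j hPi hj)

lemma iota_mem_congr {X X' : C} {x z : O} (h : S.iota X x) (h' : S.iota X' x)
    (hz : S.mem z X) : S.mem z X' := by
  by_cases he : S.equiv X X'
  · exact (he z).mp hz
  · rcases (hS.coConnected X X').mp he with hp | hp
    · exact absurd ((hS.iota_spec X' x h').1 X x hp h) (lt_irrefl hS x)
    · exact absurd ((hS.iota_spec X x h).1 X' x hp h') (lt_irrefl hS x)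

end COT

/-- Replacement for the interpreted membership `∈*` in COT: the image of a
set under a class function is a set. -/
theorem COT.memStar_replacement {O C : Type*} (S : COT O C) (hS : S.Axioms) :
    ∀ (F : O → O) (a : O), ∃ x : O,
      ∀ y, S.memStar y x ↔ ∃ z, S.memStar z a ∧ y = F z := by
  intro F a
  obtain ⟨Y, hY⟩ := hS.comp (fun y => ∃ z, S.memStar z a ∧ y = F z)
  have hbndY : S.bnd Y := by
    by_cases hA : ∃ A, S.iota A a
    · obtain ⟨A, hAa⟩ := hA
      have hmemA : ∀ z, S.memStar z a ↔ S.mem z A := by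
        intro z
        constructor
        · rintro ⟨X, hz, hX⟩
          exact COT.iota_mem_congr hS hX hAa hz
        · exact fun h => ⟨A, h, hAa⟩
      obtain ⟨A', hA'⟩ := hS.comp
        (fun z => S.mem z A ∧ ∀ w, S.mem w A → F w = F z → S.le z w)
      obtain ⟨l, hl⟩ := COT.indexed_bnd hS hAa
      have hbndA' : S.bnd A' :=
        COT.bnd_of_ub hS ⟨l, fun x hx => hl.1 x ((hA' x).mp hx).1⟩
      have hequiv : S.equinum A' Y := by
        refine ⟨fun z y => S.mem z A' ∧ y = F z, ?_, ?_, ?_⟩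
        · rintro z y ⟨hz, rfl⟩
          exact ⟨hz, (hY (F z)).mpr ⟨z, (hmemA z).mpr ((hA' z).mp hz).1, rfl⟩⟩
        · intro z hz
          exact ⟨F z, ⟨hz, rfl⟩, fun y hy => hy.2⟩
        · intro y hy
          obtain ⟨w, hw, rfl⟩ := (hY y).mp hy
          have hwA : S.mem w A := (hmemA w).mp hw
          obtain ⟨m, ⟨hmA, hmF⟩, hmin⟩ := COT.least hS
            (fun z => S.mem z A ∧ F z = F w) ⟨w, hwA, rfl⟩
          have hmA' : S.mem m A' :=
            (hA' m).mpr ⟨hmA, fun v hv hFv => hmin v ⟨hv, hFv.trans hmF⟩⟩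
          refine ⟨m, ⟨hmA', hmF.symm⟩, ?_⟩
          rintro z ⟨hzA', hz⟩
          obtain ⟨hzA, hzmin⟩ := (hA' z).mp hzA'
          exact COT.le_antisymm' hS
            (hzmin m hmA (hmF.trans hz))
            (hmin z ⟨hzA, hz.symm⟩)
      exact hS.boundedness A' Y hbndA' hequiv
    · obtain ⟨l, _⟩ := hS.infinity
      refine COT.bnd_of_ub hS ⟨l, fun x hx => ?_⟩
      obtain ⟨z, ⟨X, _, hX⟩, _⟩ := (hY x).mp hx
      exact absurd ⟨X, hX⟩ hA
  obtain ⟨x, hx⟩ := hS.indexing Y hbndY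
  refine ⟨x, fun y => ⟨?_, ?_⟩⟩
  · rintro ⟨X, hyX, hXx⟩
    exact (hY y).mp (COT.iota_mem_congr hS hXx hx hyX)
  · intro h
    exact ⟨Y, (hY y).mpr h, hx⟩
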